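/- arXiv:1611.05386 — 6 statements merged into one kernel-verified Lean document; each statement's English description precedes it below -/
import Mathlib

section
/- Let Ω₁, Ω₂ be domains in ℂ and T : Hol(Ω₁) → Hol(Ω₂) a linear operator such that for every z ∈ Ω₂ the map f ↦ T(f)(z) is continuous on Hol(Ω₁) (with the topology of uniform convergence on compacta). Let U_T = {f ∈ Hol(Ω₁) : T(f) is unbounded on Ω₂}. Then either U_T is empty, or U_T is a dense G_δ subset of Hol(Ω₁). -/
/-!
The `f` for which `T f` is bounded on `Ω₂` form a linear subspace, and `U` is its complement.
A proper subspace of a topological vector space has empty interior (a line through an interior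
point and any vector would otherwise lie in it), so its complement is dense. Since every
`f ↦ T f z` is continuous, `U = ⋂ₙ ⋃_{z ∈ Ω₂} {f | n < ‖T f z‖}` is a countable intersection of
open sets.
-/

open Set UniformOnFun Complex
open scoped UniformConvergence

noncomputable section

/-- The collection of compact subsets of `Ω`, used to define the topology of
uniform convergence on compacta. -/
def cpts (Ω : Set ℂ) : Set (Set ℂ) := {K | K ⊆ Ω ∧ IsCompact K}

/-- The space `Hol(Ω)` of holomorphic functions on `Ω`, as a submodule of the space of
functions `ℂ → ℂ` equipped with the topology of uniform convergence on compact subsets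
of `Ω`. -/
def Hol (Ω : Set ℂ) : Submodule ℂ (ℂ →ᵤ[cpts Ω] ℂ) where
  carrier := {f | DifferentiableOn ℂ (toFun (cpts Ω) f) Ω}
  add_mem' := fun hf hg => hf.add hg
  zero_mem' := differentiableOn_const 0
  smul_mem' := fun c f hf => hf.const_smul c

/-- `g` is unbounded on `X`. -/
def UnbOn (g : ℂ → ℂ) (X : Set ℂ) : Prop := ¬ ∃ C : ℝ, ∀ z ∈ X, ‖g z‖ ≤ C

theorem Submodule.dense_compl_of_ne_top {R M : Type*} [Ring R] [TopologicalSpace R]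
    [TopologicalSpace M] [AddCommGroup M] [ContinuousAdd M] [Module R M] [ContinuousSMul R M]
    [Filter.NeBot (nhdsWithin (0 : R) {x | IsUnit x})] {S : Submodule R M} (hS : S ≠ ⊤) :
    Dense (S : Set M)ᶜ :=
  interior_eq_empty_iff_dense_compl.1 <|
    not_nonempty_iff_eq_empty.1 fun h => hS (S.eq_top_of_nonempty_interior' h)

def boundedOnSubmodule (𝕜 : Type*) {α E : Type*} [NormedField 𝕜] [SeminormedAddCommGroup E]
    [NormedSpace 𝕜 E] (X : Set α) : Submodule 𝕜 (α → E) where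
  carrier := {g | ∃ C : ℝ, ∀ z ∈ X, ‖g z‖ ≤ C}
  add_mem' := fun ⟨C, hC⟩ ⟨D, hD⟩ =>
    ⟨C + D, fun z hz => (norm_add_le _ _).trans (add_le_add (hC z hz) (hD z hz))⟩
  zero_mem' := ⟨0, fun z _ => by simp⟩
  smul_mem' := fun c g ⟨C, hC⟩ =>
    ⟨‖c‖ * C, fun z hz => by
      rw [Pi.smul_apply, norm_smul]; exact mul_le_mul_of_nonneg_left (hC z hz) (norm_nonneg c)⟩

theorem isGδ_setOf_unbOn {Y : Type*} [TopologicalSpace Y] {F : Y → ℂ → ℂ} {X : Set ℂ}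
    (hF : ∀ z ∈ X, Continuous fun y => F y z) : IsGδ {y | UnbOn (F y) X} := by
  have : {y | UnbOn (F y) X} = ⋂ n : ℕ, ⋃ z ∈ X, {y | (n : ℝ) < ‖F y z‖} := by
    ext y
    simp only [UnbOn, mem_ofPred_eq, mem_iInter, mem_iUnion, not_exists, not_forall, not_le,
      exists_prop]
    refine ⟨fun h n => h n, fun h C => ?_⟩
    obtain ⟨n, hn⟩ := exists_nat_ge C
    obtain ⟨z, hz, hlt⟩ := h n
    exact ⟨z, hz, hn.trans_lt hlt⟩
  rw [this]
  exact .iInter_of_isOpen fun n => isOpen_biUnion fun z hz =>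
    isOpen_lt continuous_const (hF z hz).norm

instance Hol.continuousSMul (Ω : Set ℂ) : ContinuousSMul ℂ (Hol Ω) :=
  UniformOnFun.continuousSMul_submodule_of_image_bounded ℂ ℂ ℂ _ fun _ hu _ ⟨hKΩ, hK⟩ =>
    NormedSpace.isVonNBounded_of_isBounded ℂ ((hK.image_of_continuousOn
      ((hu : DifferentiableOn ℂ _ Ω).continuousOn.mono hKΩ)).isBounded)

theorem stmt0_general (Ω₁ Ω₂ : Set ℂ)
    (T : Hol Ω₁ →ₗ[ℂ] Hol Ω₂)
    (hT : ∀ z ∈ Ω₂, Continuous fun f : Hol Ω₁ => toFun (cpts Ω₂) (T f).1 z)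
    (U : Set (Hol Ω₁))
    (hU : U = {f : Hol Ω₁ | UnbOn (toFun (cpts Ω₂) (T f).1) Ω₂}) :
    U = ∅ ∨ (Dense U ∧ IsGδ U) := by
  set S := (boundedOnSubmodule ℂ Ω₂).comap (LinearMap.id.domRestrict (Hol Ω₂) ∘ₗ T)
  have hUS : U = (S : Set (Hol Ω₁))ᶜ := hU
  rcases eq_or_ne S ⊤ with hS | hS
  · left; rw [hUS, hS, Submodule.top_coe, compl_univ]
  · right; exact ⟨hUS ▸ S.dense_compl_of_ne_top hS, hU ▸ isGδ_setOf_unbOn hT⟩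

theorem stmt0 (Ω₁ Ω₂ : Set ℂ) (hΩ₁ : IsOpen Ω₁) (hΩ₁' : IsConnected Ω₁)
    (hΩ₂ : IsOpen Ω₂) (hΩ₂' : IsConnected Ω₂)
    (T : Hol Ω₁ →ₗ[ℂ] Hol Ω₂)
    (hT : ∀ z ∈ Ω₂, Continuous fun f : Hol Ω₁ => toFun (cpts Ω₂) (T f).1 z)
    (U : Set (Hol Ω₁))
    (hU : U = {f : Hol Ω₁ | UnbOn (toFun (cpts Ω₂) (T f).1) Ω₂}) :
    U = ∅ ∨ (Dense U ∧ IsGδ U) :=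
  stmt0_general Ω₁ Ω₂ T hT U hU
end
end

section
/- Let Ω₁, Ω₂ be domains in ℂ and for each n ∈ ℤ let T_n : Hol(Ω₁) → Hol(Ω₂) be a linear operator such that for every z ∈ Ω₂ the map f ↦ T_n(f)(z) is continuous. If for every n the set U_{T_n} = {f : T_n(f) is unbounded on Ω₂} is nonempty, then the intersection ⋂_{n∈ℤ} U_{T_n} is a dense G_δ subset of Hol(Ω₁). -/
open Set UniformOnFun Complex
open scoped UniformConvergence

noncomputable section

/-!
Each `U n` is the set of `f` at which the pointwise continuous linear functionals
`f ↦ T_n(f)(z)`, `z ∈ Ω₂`, are unbounded. It is the intersection over `m ∈ ℕ` of the open sets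
`{f | ∃ z, m < |T_n(f)(z)|}`, each of which is dense: if `f` lies outside it and `g ∈ U n`,
then `f + c g` lies inside it for every `c ≠ 0`. As `Hol(Ω₁)` is a closed subspace of a
completely metrizable space, it is a Baire space, so `U n` and then `⋂ n, U n` are dense `G_δ`.
-/

section Unbounded

variable {𝕜 X F ι : Type*} [NontriviallyNormedField 𝕜] [AddCommGroup X] [Module 𝕜 X]
  [SeminormedAddCommGroup F] [NormedSpace 𝕜 F] (φ : ι → X →ₗ[𝕜] F)

lemma isOpen_setOf_exists_lt_norm [TopologicalSpace X] (hφ : ∀ i, Continuous (φ i)) (r : ℝ) :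
    IsOpen {f | ∃ i, r < ‖φ i f‖} := by
  simp only [ofPred_exists]
  exact isOpen_iUnion fun i => isOpen_lt continuous_const ((hφ i).norm)

lemma add_smul_mem_setOf_exists_lt_norm {f g : X} {r : ℝ}
    (hf : f ∉ {f | ∃ i, r < ‖φ i f‖}) (hg : ¬ BddAbove (range fun i => ‖φ i g‖))
    {c : 𝕜} (hc : c ≠ 0) : f + c • g ∈ {f | ∃ i, r < ‖φ i f‖} := by
  by_contra hfg
  simp only [mem_ofPred_eq, not_exists, not_lt] at hf hfg
  refine hg ⟨2 * r / ‖c‖, forall_mem_range.2 fun i => ?_⟩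
  rw [le_div_iff₀ (norm_pos_iff.2 hc), mul_comm, ← norm_smul]
  calc ‖c • φ i g‖ = ‖φ i (f + c • g) - φ i f‖ := by simp
    _ ≤ ‖φ i (f + c • g)‖ + ‖φ i f‖ := norm_sub_le _ _
    _ ≤ 2 * r := by linarith [hf i, hfg i]

lemma dense_setOf_exists_lt_norm [TopologicalSpace X] [ContinuousAdd X] [ContinuousSMul 𝕜 X] {g : X}
    (hg : ¬ BddAbove (range fun i => ‖φ i g‖)) (r : ℝ) :
    Dense {f | ∃ i, r < ‖φ i f‖} := by
  intro f
  by_cases hf : f ∈ {f | ∃ i, r < ‖φ i f‖}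
  · exact subset_closure hf
  have hlim : Filter.Tendsto (fun c : 𝕜 => f + c • g) (nhdsWithin 0 {0}ᶜ) (nhds f) := by
    have : Continuous fun c : 𝕜 => f + c • g := by fun_prop
    simpa using (this.tendsto 0).mono_left nhdsWithin_le_nhds
  exact mem_closure_of_tendsto hlim <| eventually_mem_nhdsWithin.mono fun c hc =>
    add_smul_mem_setOf_exists_lt_norm φ hf hg hc

lemma setOf_not_bddAbove_norm_eq_iInter :
    {f | ¬ BddAbove (range fun i => ‖φ i f‖)} = ⋂ m : ℕ, {f | ∃ i, (m : ℝ) < ‖φ i f‖} := by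
  ext f
  simp only [mem_ofPred_eq, mem_iInter, bddAbove_def, forall_mem_range, not_exists, not_forall,
    not_le]
  exact ⟨fun h m => h m, fun h C => (h ⌈C⌉₊).imp fun i hi => (Nat.le_ceil C).trans_lt hi⟩

lemma isGδ_setOf_not_bddAbove_norm [TopologicalSpace X] (hφ : ∀ i, Continuous (φ i)) :
    IsGδ {f | ¬ BddAbove (range fun i => ‖φ i f‖)} := by
  rw [setOf_not_bddAbove_norm_eq_iInter]
  exact .iInter_of_isOpen fun m => isOpen_setOf_exists_lt_norm φ hφ m

lemma dense_setOf_not_bddAbove_norm [TopologicalSpace X] [BaireSpace X] [ContinuousAdd X] [ContinuousSMul 𝕜 X]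
    (hφ : ∀ i, Continuous (φ i)) {g : X} (hg : ¬ BddAbove (range fun i => ‖φ i g‖)) :
    Dense {f | ¬ BddAbove (range fun i => ‖φ i f‖)} := by
  rw [setOf_not_bddAbove_norm_eq_iInter]
  exact dense_iInter_of_isOpen (fun m => isOpen_setOf_exists_lt_norm φ hφ m)
    (fun m => dense_setOf_exists_lt_norm φ hg m)

end Unbounded

lemma unbOn_iff_not_bddAbove_norm (g : ℂ → ℂ) (X : Set ℂ) :
    UnbOn g X ↔ ¬ BddAbove (range fun z : X => ‖g z‖) := by
  simp [UnbOn, bddAbove_def]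

lemma isCountablyGenerated_uniformity_cpts {Ω : Set ℂ} (hΩ : IsOpen Ω) :
    (uniformity (ℂ →ᵤ[cpts Ω] ℂ)).IsCountablyGenerated := by
  have : LocallyCompactSpace Ω := hΩ.locallyCompactSpace
  let K := CompactExhaustion.choice Ω
  refine UniformOnFun.isCountablyGenerated_uniformity _ (t := fun n => (↑) '' K n)
    (fun n => ⟨Subtype.coe_image_subset _ _, (K.isCompact n).image continuous_subtype_val⟩)
    (fun m n h => image_mono (K.subset h)) ?_
  rintro s ⟨hsΩ, hs⟩
  have : IsCompact ((↑) ⁻¹' s : Set Ω) := by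
    rwa [Subtype.isCompact_iff, Subtype.image_preimage_coe, inter_eq_self_of_subset_right hsΩ]
  obtain ⟨n, hn⟩ := K.exists_superset_of_isCompact this
  exact ⟨n, fun z hz => ⟨⟨z, hsΩ hz⟩, hn hz, rfl⟩⟩

namespace Hol

def eval (Ω : Set ℂ) (z : ℂ) : Hol Ω →ₗ[ℂ] ℂ where
  toFun f := toFun (cpts Ω) f.1 z
  map_add' _ _ := rfl
  map_smul' _ _ := rfl

lemma isClosed {Ω : Set ℂ} (hΩ : IsOpen Ω) : IsClosed (Hol Ω : Set (ℂ →ᵤ[cpts Ω] ℂ)) := by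
  have := isCountablyGenerated_uniformity_cpts hΩ
  have : FirstCountableTopology (ℂ →ᵤ[cpts Ω] ℂ) := UniformSpace.firstCountableTopology _
  refine IsSeqClosed.isClosed fun f g hf hfg => ?_
  rw [UniformOnFun.tendsto_iff_tendstoUniformlyOn] at hfg
  have : TendstoLocallyUniformlyOn (fun n => toFun (cpts Ω) (f n)) (toFun (cpts Ω) g)
      Filter.atTop Ω :=
    (tendstoLocallyUniformlyOn_iff_forall_isCompact hΩ).2 fun K hK hK' => hfg K ⟨hK, hK'⟩
  exact this.differentiableOn (.of_forall hf) hΩ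

lemma baireSpace {Ω : Set ℂ} (hΩ : IsOpen Ω) : BaireSpace (Hol Ω) := by
  have := isCountablyGenerated_uniformity_cpts hΩ
  have : CompleteSpace (Hol Ω) := (isClosed hΩ).completeSpace_coe
  have : (uniformity (Hol Ω)).IsCountablyGenerated := Filter.comap.isCountablyGenerated _ _
  let := UniformSpace.pseudoMetricSpace (Hol Ω)
  exact BaireSpace.of_completelyPseudoMetrizable

instance (Ω : Set ℂ) : ContinuousSMul ℂ (Hol Ω) := by
  refine UniformOnFun.continuousSMul_submodule_of_image_bounded ℂ ℂ ℂ (Hol Ω) ?_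
  rintro u hu s ⟨hsΩ, hs⟩
  rw [NormedSpace.isVonNBounded_iff]
  exact (hs.image_of_continuousOn (hu.continuousOn.mono hsΩ)).isBounded

end Hol

theorem stmt1_general (Ω₁ Ω₂ : Set ℂ) (hΩ₁ : IsOpen Ω₁)
    (T : ℤ → (Hol Ω₁ →ₗ[ℂ] Hol Ω₂))
    (hT : ∀ (n : ℤ), ∀ z ∈ Ω₂, Continuous fun f : Hol Ω₁ => toFun (cpts Ω₂) (T n f).1 z)
    (U : ℤ → Set (Hol Ω₁))
    (hU : ∀ n : ℤ, U n = {f : Hol Ω₁ | UnbOn (toFun (cpts Ω₂) (T n f).1) Ω₂})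
    (hne : ∀ n : ℤ, (U n).Nonempty) :
    Dense (⋂ n : ℤ, U n) ∧ IsGδ (⋂ n : ℤ, U n) := by
  have := Hol.baireSpace hΩ₁
  let φ (n : ℤ) (z : Ω₂) : Hol Ω₁ →ₗ[ℂ] ℂ := Hol.eval Ω₂ z ∘ₗ T n
  have hφ (n : ℤ) (z : Ω₂) : Continuous (φ n z) := hT n z z.2
  have hUφ (n : ℤ) : U n = {f | ¬ BddAbove (range fun z => ‖φ n z f‖)} := by
    simp only [hU n, unbOn_iff_not_bddAbove_norm]
    rfl
  have hGδ (n : ℤ) : IsGδ (U n) := hUφ n ▸ isGδ_setOf_not_bddAbove_norm (φ n) (hφ n)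
  have hdense (n : ℤ) : Dense (U n) := by
    obtain ⟨g, hg⟩ := hne n
    rw [hUφ n] at hg ⊢
    exact dense_setOf_not_bddAbove_norm (φ n) (hφ n) hg
  exact ⟨dense_iInter_of_Gδ hGδ hdense, .iInter hGδ⟩

theorem stmt1 (Ω₁ Ω₂ : Set ℂ) (hΩ₁ : IsOpen Ω₁) (hΩ₁' : IsConnected Ω₁)
    (hΩ₂ : IsOpen Ω₂) (hΩ₂' : IsConnected Ω₂)
    (T : ℤ → (Hol Ω₁ →ₗ[ℂ] Hol Ω₂))
    (hT : ∀ (n : ℤ), ∀ z ∈ Ω₂, Continuous fun f : Hol Ω₁ => toFun (cpts Ω₂) (T n f).1 z)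
    (U : ℤ → Set (Hol Ω₁))
    (hU : ∀ n : ℤ, U n = {f : Hol Ω₁ | UnbOn (toFun (cpts Ω₂) (T n f).1) Ω₂})
    (hne : ∀ n : ℤ, (U n).Nonempty) :
    Dense (⋂ n : ℤ, U n) ∧ IsGδ (⋂ n : ℤ, U n) :=
  stmt1_general Ω₁ Ω₂ hΩ₁ T hT U hU hne
end
end

section
/- Let Ω ⊆ ℂ be open and nonempty. Then the set A₀ of all holomorphic functions f on Ω that are bounded on Ω is a set of the first (meager) category in Hol(Ω). -/
open Set UniformOnFun Complex
open scoped UniformConvergence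

noncomputable section

/-! Bounded holomorphic functions on `Ω` form a linear subspace of `Hol(Ω)`, and it is proper:
`z ↦ z` is unbounded on `Ω = ℂ`, and otherwise `z ↦ (z - w)⁻¹` is unbounded for a boundary
point `w` of `Ω`. Since `Hol(Ω)` is a topological vector space, a proper subspace has empty
interior, so each of the closed sets `{f | ‖f‖ ≤ n on Ω}` covering it is nowhere dense. -/

theorem Submodule.isMeagre_iUnion_isClosed_of_ne_top {R M ι : Type*} [Ring R]
    [TopologicalSpace R] [TopologicalSpace M] [AddCommGroup M] [ContinuousAdd M] [Module R M]
    [ContinuousSMul R M] [Filter.NeBot (nhdsWithin (0 : R) {x | IsUnit x})]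
    [Countable ι] {p : Submodule R M} (hp : p ≠ ⊤) {F : ι → Set M} (hF : ∀ i, IsClosed (F i))
    (hFp : ∀ i, F i ⊆ p) : IsMeagre (⋃ i, F i) := by
  refine isMeagre_iUnion fun i => IsNowhereDense.isMeagre ?_
  rw [(hF i).isNowhereDense_iff, ← not_nonempty_iff_eq_empty]
  exact fun h => hp (p.eq_top_of_nonempty_interior' (h.mono (interior_mono (hFp i))))

instance Hol.instContinuousSMul (Ω : Set ℂ) : ContinuousSMul ℂ (Hol Ω) :=
  UniformOnFun.continuousSMul_submodule_of_image_bounded ℂ ℂ ℂ (Hol Ω)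
    fun _ hf _ hK => NormedSpace.isVonNBounded_of_isBounded ℂ
      ((hK.2.image_of_continuousOn (hf.continuousOn.mono hK.1)).isBounded)

theorem Hol.continuous_eval {Ω : Set ℂ} {z : ℂ} (hz : z ∈ Ω) :
    Continuous fun f : Hol Ω => toFun (cpts Ω) f.1 z :=
  (uniformContinuous_eval_of_mem ℂ (cpts Ω) (mem_singleton z)
    ⟨singleton_subset_iff.mpr hz, isCompact_singleton⟩).continuous.comp continuous_subtype_val

theorem Hol.isClosed_setOf_norm_le (Ω : Set ℂ) (r : ℝ) :
    IsClosed {f : Hol Ω | ∀ z ∈ Ω, ‖toFun (cpts Ω) f.1 z‖ ≤ r} := by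
  simp only [ofPred_forall]
  exact isClosed_biInter fun z hz =>
    isClosed_le (Hol.continuous_eval hz).norm continuous_const

def Hol.boundedSubmodule (Ω : Set ℂ) : Submodule ℂ (Hol Ω) where
  carrier := {f | ∃ C : ℝ, ∀ z ∈ Ω, ‖toFun (cpts Ω) f.1 z‖ ≤ C}
  add_mem' := by
    rintro f g ⟨C, hC⟩ ⟨D, hD⟩
    exact ⟨C + D, fun z hz => (norm_add_le _ _).trans (add_le_add (hC z hz) (hD z hz))⟩
  zero_mem' := ⟨0, fun z _ => by simp⟩
  smul_mem' := by
    rintro c f ⟨C, hC⟩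
    refine ⟨‖c‖ * C, fun z hz => ?_⟩
    show ‖c * toFun (cpts Ω) f.1 z‖ ≤ _
    rw [norm_mul]
    exact mul_le_mul_of_nonneg_left (hC z hz) (norm_nonneg c)

theorem unbOn_inv_sub {Ω : Set ℂ} {w : ℂ} (hw : w ∈ closure Ω \ Ω) :
    UnbOn (fun z => (z - w)⁻¹) Ω := by
  rintro ⟨C, hC⟩
  have : (nhdsWithin w Ω).NeBot := mem_closure_iff_nhdsWithin_neBot.mp hw.1
  have hsub : Filter.Tendsto (fun z => z - w) (nhdsWithin w Ω) (nhdsWithin 0 {0}ᶜ) := by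
    refine tendsto_nhdsWithin_of_tendsto_nhds_of_eventually_within _ ?_
      (eventually_nhdsWithin_of_forall fun z hz => sub_ne_zero.mpr (ne_of_mem_of_not_mem hz hw.2))
    simpa using ((continuous_sub_right w).tendsto w).mono_left nhdsWithin_le_nhds
  obtain ⟨z, hCz, hz⟩ := ((tendsto_norm_inv_nhdsNE_zero_atTop.comp hsub).eventually_gt_atTop C
    |>.and self_mem_nhdsWithin).exists
  exact (hC z hz).not_gt hCz

theorem exists_differentiableOn_unbOn {Ω : Set ℂ} (hΩ : IsOpen Ω) (hne : Ω.Nonempty) :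
    ∃ h : ℂ → ℂ, DifferentiableOn ℂ h Ω ∧ UnbOn h Ω := by
  by_cases htop : Ω = univ
  · refine ⟨id, differentiableOn_id, ?_⟩
    rintro ⟨C, hC⟩
    have := hC ((C + 1 : ℝ) : ℂ) (htop ▸ mem_univ _)
    rw [id, norm_real, Real.norm_eq_abs] at this
    linarith [le_abs_self (C + 1)]
  · obtain ⟨w, hw⟩ := nonempty_frontier_iff.mpr ⟨hne, htop⟩
    rw [hΩ.frontier_eq] at hw
    refine ⟨fun z => (z - w)⁻¹, fun z hz => ?_, unbOn_inv_sub hw⟩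
    exact ((differentiableAt_id.sub_const w).inv
      (sub_ne_zero.mpr fun h => hw.2 (h ▸ hz))).differentiableWithinAt

theorem stmt2 (Ω : Set ℂ) (hΩ : IsOpen Ω) (hne : Ω.Nonempty) :
    IsMeagre {f : Hol Ω | ∃ C : ℝ, ∀ z ∈ Ω, ‖toFun (cpts Ω) f.1 z‖ ≤ C} := by
  obtain ⟨h, hdiff, hunb⟩ := exists_differentiableOn_unbOn hΩ hne
  have hne_top : Hol.boundedSubmodule Ω ≠ ⊤ := fun htop =>
    hunb (Submodule.eq_top_iff'.mp htop ⟨ofFun (cpts Ω) h, hdiff⟩)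
  refine (Submodule.isMeagre_iUnion_isClosed_of_ne_top hne_top
    (fun n : ℕ => Hol.isClosed_setOf_norm_le Ω n) fun n f hf => ⟨n, hf⟩).mono ?_
  rintro f ⟨C, hC⟩
  exact mem_iUnion.mpr ⟨⌈C⌉₊, fun z hz => (hC z hz).trans (Nat.le_ceil C)⟩
end
end

section
/- Let Ω ⊆ ℂ be open and nonempty, and let k ≥ 1 be an integer. Then the set A_k of all holomorphic functions f on Ω whose k-th derivative f^{(k)} is bounded on Ω is a set of the first category in Hol(Ω). -/
open Set UniformOnFun Complex
open scoped UniformConvergence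

noncomputable section

/-!
`A_k` is the union of the sets `E_n = {f | ‖f^{(k)}‖ ≤ n on Ω}`. By Cauchy's estimates,
`f ↦ f^{(k)}(z)` is continuous on `Hol(Ω)`, so each `E_n` is closed. It has empty interior:
`f + t • h → f` as `t → 0`, and some `h ∈ Hol(Ω)` has unbounded `k`-th derivative, namely `exp`
if `Ω = ℂ`, and `z ↦ (z - b)⁻¹` for a boundary point `b` of `Ω` otherwise.
-/

open Filter Metric Topology Bornology
open scoped Nat

section

variable {Ω : Set ℂ}

section IteratedDeriv

variable {f g : ℂ → ℂ} {z : ℂ}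

lemma iteratedDeriv_sub_of_differentiableOn (hΩ : IsOpen Ω) (hf : DifferentiableOn ℂ f Ω)
    (hg : DifferentiableOn ℂ g Ω) (hz : z ∈ Ω) (k : ℕ) :
    iteratedDeriv k (f - g) z = iteratedDeriv k f z - iteratedDeriv k g z :=
  iteratedDeriv_sub ((hf.analyticAt (hΩ.mem_nhds hz)).contDiffAt)
    ((hg.analyticAt (hΩ.mem_nhds hz)).contDiffAt)

lemma iteratedDeriv_add_smul_of_differentiableOn (hΩ : IsOpen Ω) (hf : DifferentiableOn ℂ f Ω)
    (hg : DifferentiableOn ℂ g Ω) (hz : z ∈ Ω) (c : ℂ) (k : ℕ) :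
    iteratedDeriv k (f + c • g) z = iteratedDeriv k f z + c * iteratedDeriv k g z := by
  rw [iteratedDeriv_add ((hf.analyticAt (hΩ.mem_nhds hz)).contDiffAt)
    ((hg.const_smul c).analyticAt (hΩ.mem_nhds hz)).contDiffAt, iteratedDeriv_const_smul_field,
    smul_eq_mul]

end IteratedDeriv

lemma unbOn_of_tendsto_cobounded {g : ℂ → ℂ} {X : Set ℂ} {l : Filter ℂ} [l.NeBot] (hX : X ∈ l)
    (hg : Tendsto g l (cobounded ℂ)) : UnbOn g X := by
  rintro ⟨C, hC⟩
  obtain ⟨z, hCz, hz⟩ :=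
    ((tendsto_norm_atTop_iff_cobounded.2 hg).eventually_gt_atTop C).and hX |>.exists
  exact (hC z hz).not_gt hCz

lemma unbOn_iteratedDeriv_exp (k : ℕ) : UnbOn (iteratedDeriv k exp) univ := by
  have : (comap re atTop).NeBot := comap_neBot fun t ht =>
    let ⟨x, hx⟩ := atTop_neBot.nonempty_of_mem ht
    ⟨x, by simpa using hx⟩
  rw [iteratedDeriv_eq_iterate, iter_deriv_exp]
  exact unbOn_of_tendsto_cobounded univ_mem tendsto_exp_comap_re_atTop

lemma iteratedDeriv_inv_sub (b : ℂ) (k : ℕ) :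
    iteratedDeriv k (fun z => (z - b)⁻¹) =
      fun z => (∏ i ∈ Finset.range k, ((-1 : ℤ) - i : ℂ)) * (z - b) ^ (-1 - k : ℤ) := by
  simp_rw [← zpow_neg_one]
  rw [iteratedDeriv_comp_sub_const (f := fun z : ℂ => z ^ (-1 : ℤ))]
  simp only [iteratedDeriv_eq_iterate, iter_deriv_zpow]

lemma unbOn_iteratedDeriv_inv_sub {b : ℂ} (hb : b ∈ closure Ω) (hbΩ : b ∉ Ω) (k : ℕ) :
    UnbOn (iteratedDeriv k fun z => (z - b)⁻¹) Ω := by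
  have := mem_closure_iff_nhdsWithin_neBot.1 hb
  have hc : ∏ i ∈ Finset.range k, ((-1 : ℤ) - i : ℂ) ≠ 0 :=
    Finset.prod_ne_zero_iff.2 fun i _ => by
      rw [sub_ne_zero]; exact_mod_cast (show (-1 : ℤ) ≠ i by omega)
  have hsub : Tendsto (· - b) (𝓝[Ω] b) (𝓝[≠] 0) :=
    tendsto_nhdsWithin_iff.2 ⟨((continuous_sub_right b).tendsto' b 0 (sub_self b)).mono_left
      nhdsWithin_le_nhds, eventually_mem_nhdsWithin.mono fun z hz =>
        sub_ne_zero.2 (ne_of_mem_of_not_mem hz hbΩ)⟩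
  rw [iteratedDeriv_inv_sub]
  exact unbOn_of_tendsto_cobounded self_mem_nhdsWithin <| (tendsto_mul_left_cobounded hc).comp <|
    (tendsto_zpow_nhdsNE_zero_cobounded (by omega)).comp hsub

namespace Hol

lemma hasBasis_nhds (f : Hol Ω) :
    (𝓝 f).HasBasis (fun p : Set ℂ × ℝ => p.1 ∈ cpts Ω ∧ 0 < p.2) fun p =>
      {g : Hol Ω | ∀ x ∈ p.1, dist (toFun (cpts Ω) g.1 x) (toFun (cpts Ω) f.1 x) < p.2} := by
  have hcpts : (cpts Ω).Nonempty := ⟨∅, empty_subset Ω, isCompact_empty⟩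
  have hdir : DirectedOn (· ⊆ ·) (cpts Ω) := fun K hK L hL =>
    ⟨K ∪ L, ⟨union_subset hK.1 hL.1, hK.2.union hL.2⟩, subset_union_left, subset_union_right⟩
  rw [nhds_induced]
  exact (UniformOnFun.hasBasis_nhds_of_basis ℂ ℂ (cpts Ω) f.1 hcpts hdir
    uniformity_basis_dist).comap _

lemma tendsto_add_smul_nhds_zero (f h : Hol Ω) :
    Tendsto (fun t : ℂ => f + t • h) (𝓝 0) (𝓝 f) := by
  refine (hasBasis_nhds f).tendsto_right_iff.2 fun ⟨K, ε⟩ ⟨hK, hε⟩ => ?_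
  obtain ⟨M, hM⟩ := hK.2.exists_bound_of_continuousOn (h.2.continuousOn.mono hK.1)
  have hsmall : ∀ᶠ t : ℂ in 𝓝 0, ‖t‖ * M < ε :=
    ((continuous_norm.mul continuous_const).tendsto' (0 : ℂ) 0 (by simp)).eventually
      (gt_mem_nhds hε)
  filter_upwards [hsmall] with t ht x hx
  calc dist (toFun (cpts Ω) (f + t • h).1 x) (toFun (cpts Ω) f.1 x)
      = ‖t‖ * ‖toFun (cpts Ω) h.1 x‖ := by
        simp [dist_eq_norm]
    _ ≤ ‖t‖ * M := by gcongr; exact hM x hx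
    _ < ε := ht

lemma continuous_iteratedDeriv_apply (hΩ : IsOpen Ω) {z : ℂ} (hz : z ∈ Ω) (k : ℕ) :
    Continuous fun f : Hol Ω => iteratedDeriv k (toFun (cpts Ω) f.1) z := by
  refine continuous_iff_continuousAt.2 fun f => Metric.tendsto_nhds.2 fun ε hε => ?_
  obtain ⟨r, hr, hrΩ⟩ := nhds_basis_closedBall.mem_iff.1 (hΩ.mem_nhds hz)
  set δ := ε * r ^ k / (2 * k !)
  have hδ : 0 < δ := by positivity
  filter_upwards [(hasBasis_nhds f).mem_of_mem (i := (closedBall z r, δ))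
    ⟨⟨hrΩ, isCompact_closedBall z r⟩, hδ⟩] with g hg
  have hcauchy := norm_iteratedDeriv_le_of_forall_mem_sphere_norm_le k hr
    ((g.2.sub f.2).mono hrΩ |>.diffContOnCl_ball subset_rfl)
    fun w hw => by simpa [dist_eq_norm] using (hg w (sphere_subset_closedBall hw)).le
  rw [dist_eq_norm, ← iteratedDeriv_sub_of_differentiableOn hΩ g.2 f.2 hz]
  calc _ ≤ k ! * δ / r ^ k := hcauchy
    _ = ε / 2 := by simp only [δ]; field_simp
    _ < ε := half_lt_self hε

lemma exists_unbOn_iteratedDeriv (hΩ : IsOpen Ω) (hne : Ω.Nonempty) (k : ℕ) :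
    ∃ h : Hol Ω, UnbOn (iteratedDeriv k (toFun (cpts Ω) h.1)) Ω := by
  by_cases huniv : Ω = univ
  · subst huniv
    exact ⟨⟨UniformOnFun.ofFun _ exp, differentiable_exp.differentiableOn⟩,
      unbOn_iteratedDeriv_exp k⟩
  · obtain ⟨b, hb⟩ := nonempty_frontier_iff.2 ⟨hne, huniv⟩
    rw [hΩ.frontier_eq] at hb
    refine ⟨⟨UniformOnFun.ofFun _ fun z => (z - b)⁻¹, fun z hz => ?_⟩,
      unbOn_iteratedDeriv_inv_sub hb.1 hb.2 k⟩
    exact ((differentiableAt_id.sub_const b).inv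
      (sub_ne_zero.2 (ne_of_mem_of_not_mem hz hb.2))).differentiableWithinAt

def iteratedDerivBoundedBy (Ω : Set ℂ) (k : ℕ) (C : ℝ) : Set (Hol Ω) :=
  {f | ∀ z ∈ Ω, ‖iteratedDeriv k (toFun (cpts Ω) f.1) z‖ ≤ C}

lemma isClosed_iteratedDerivBoundedBy (hΩ : IsOpen Ω) (k : ℕ) (C : ℝ) :
    IsClosed (iteratedDerivBoundedBy Ω k C) := by
  simp only [iteratedDerivBoundedBy, ofPred_forall]
  exact isClosed_biInter fun z hz =>
    isClosed_le (continuous_iteratedDeriv_apply hΩ hz k).norm continuous_const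

lemma interior_iteratedDerivBoundedBy_eq_empty (hΩ : IsOpen Ω) {k : ℕ} {h : Hol Ω}
    (hh : UnbOn (iteratedDeriv k (toFun (cpts Ω) h.1)) Ω) (C : ℝ) :
    interior (iteratedDerivBoundedBy Ω k C) = ∅ := by
  refine eq_empty_iff_forall_notMem.2 fun f hf => hh ?_
  have hnear : ∀ᶠ t in 𝓝[≠] (0 : ℂ), f + t • h ∈ iteratedDerivBoundedBy Ω k C :=
    ((tendsto_add_smul_nhds_zero f h).mono_left nhdsWithin_le_nhds).eventually
      (mem_interior_iff_mem_nhds.1 hf)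
  obtain ⟨t, ht, ht0⟩ := (hnear.and self_mem_nhdsWithin).exists
  refine ⟨2 * C / ‖t‖, fun z hz => (le_div_iff₀ (norm_pos_iff.2 ht0)).2 ?_⟩
  have hsum := iteratedDeriv_add_smul_of_differentiableOn hΩ f.2 h.2 hz t k
  calc ‖iteratedDeriv k (toFun (cpts Ω) h.1) z‖ * ‖t‖
      = ‖iteratedDeriv k (toFun (cpts Ω) (f + t • h).1) z -
          iteratedDeriv k (toFun (cpts Ω) f.1) z‖ := by
        rw [show toFun (cpts Ω) (f + t • h).1 = toFun (cpts Ω) f.1 + t • toFun (cpts Ω) h.1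
          from rfl, hsum, add_sub_cancel_left, norm_mul, mul_comm]
    _ ≤ ‖iteratedDeriv k (toFun (cpts Ω) (f + t • h).1) z‖ +
          ‖iteratedDeriv k (toFun (cpts Ω) f.1) z‖ := norm_sub_le _ _
    _ ≤ 2 * C := by linarith [ht z hz, interior_subset hf z hz]

end Hol

end

theorem stmt3_general (Ω : Set ℂ) (hΩ : IsOpen Ω) (hne : Ω.Nonempty) (k : ℕ) :
    IsMeagre {f : Hol Ω |
      ∃ C : ℝ, ∀ z ∈ Ω, ‖iteratedDeriv k (toFun (cpts Ω) f.1) z‖ ≤ C} := by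
  obtain ⟨h, hh⟩ := Hol.exists_unbOn_iteratedDeriv hΩ hne k
  have hcover : {f : Hol Ω | ∃ C : ℝ, ∀ z ∈ Ω, ‖iteratedDeriv k (toFun (cpts Ω) f.1) z‖ ≤ C} ⊆
      ⋃ n : ℕ, Hol.iteratedDerivBoundedBy Ω k n := fun f ⟨C, hC⟩ =>
    mem_iUnion.2 ⟨⌈C⌉₊, fun z hz => (hC z hz).trans (Nat.le_ceil C)⟩
  refine (isMeagre_iUnion fun n => ?_).mono hcover
  exact ((Hol.isClosed_iteratedDerivBoundedBy hΩ k n).isNowhereDense_iff.2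
    (Hol.interior_iteratedDerivBoundedBy_eq_empty hΩ hh n)).isMeagre

theorem stmt3 (Ω : Set ℂ) (hΩ : IsOpen Ω) (hne : Ω.Nonempty) (k : ℕ) (hk : 1 ≤ k) :
    IsMeagre {f : Hol Ω |
      ∃ C : ℝ, ∀ z ∈ Ω, ‖iteratedDeriv k (toFun (cpts Ω) f.1) z‖ ≤ C} :=
  stmt3_general Ω hΩ hne k
end
end

section
/- Let Ω ⊆ ℂ be a simply connected domain, ζ₀ ∈ Ω, and k ≥ 1. Define T^{(k)}(f) to be the k-fold iterated antiderivative of f (each antiderivative vanishing at ζ₀). Then the set B_k of all f ∈ Hol(Ω) such that T^{(k)}(f) is bounded on Ω is a set of the first category in Hol(Ω). -/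
/-
Write `E n` for the set of `f` with `‖T^[k] f‖ ≤ n` on `Ω`. Each `E n` is closed because `T` is
continuous on `Hol Ω`: on a connected open set, a primitive vanishing at `ζ₀` is bounded on a
compact set by a multiple of a bound of its derivative on a larger compact set (mean value
inequality on discs, propagated by connectedness). Since `T^[k]` is linear on `Ω`, the `f` for which
`T^[k] f` is bounded form a linear subspace, and it is proper: when `Ω = ℂ` take `f z = z` and
use Liouville's theorem; otherwise take a pole `(z - w) ^ (-(k + 1))` at a boundary point `w`,
whose `k`-th primitive is `c / (z - w)` plus an entire function. A proper subspace has empty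
interior, so every `E n` is nowhere dense.
-/

open Set UniformOnFun Complex
open scoped UniformConvergence

noncomputable section

open Filter Metric
open scoped Topology

theorem LinearMap.isMeagre_setOf_bounded {𝕜 M ι F : Type*} [NontriviallyNormedField 𝕜]
    [AddCommGroup M] [Module 𝕜 M] [TopologicalSpace M] [ContinuousAdd M] [ContinuousSMul 𝕜 M]
    [SeminormedAddCommGroup F] [NormedSpace 𝕜 F] (L : M →ₗ[𝕜] ι → F)
    (hL : ∀ i, Continuous fun x => L x i) (hunb : ∃ x, ¬ ∃ C, ∀ i, ‖L x i‖ ≤ C) :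
    IsMeagre {x | ∃ C, ∀ i, ‖L x i‖ ≤ C} := by
  let p : Submodule 𝕜 M :=
    { carrier := {x | ∃ C, ∀ i, ‖L x i‖ ≤ C}
      zero_mem' := ⟨0, fun i => by simp⟩
      add_mem' := fun {x y} ⟨C, hC⟩ ⟨D, hD⟩ =>
        ⟨C + D, fun i => by simpa using (norm_add_le _ _).trans (add_le_add (hC i) (hD i))⟩
      smul_mem' := fun c x ⟨C, hC⟩ => ⟨‖c‖ * C, fun i => by
        simpa [norm_smul] using mul_le_mul_of_nonneg_left (hC i) (norm_nonneg c)⟩ }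
  have hp : interior (p : Set M) = ∅ := by
    refine not_nonempty_iff_eq_empty.1 fun hne => ?_
    obtain ⟨x, hx⟩ := hunb
    exact hx (p.eq_top_of_nonempty_interior' hne ▸ Submodule.mem_top : x ∈ p)
  have hclosed (n : ℕ) : IsClosed {x | ∀ i, ‖L x i‖ ≤ n} := by
    rw [ofPred_forall]
    exact isClosed_iInter fun i => isClosed_le (hL i).norm continuous_const
  have hcover : {x | ∃ C, ∀ i, ‖L x i‖ ≤ C} ⊆ ⋃ n : ℕ, {x | ∀ i, ‖L x i‖ ≤ n} :=
    fun x ⟨C, hC⟩ => mem_iUnion.2 ⟨⌈C⌉₊, fun i => (hC i).trans (Nat.le_ceil C)⟩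
  refine (isMeagre_iUnion fun n => IsNowhereDense.isMeagre ?_).mono hcover
  refine (hclosed n).isNowhereDense_iff.2 (subset_empty_iff.1 (hp ▸ interior_mono ?_))
  exact fun x hx => ⟨n, hx⟩

section Primitive

variable {𝕜 E : Type*}

def IsPrimitiveOn [NontriviallyNormedField 𝕜] [NormedAddCommGroup E] [NormedSpace 𝕜 E]
    (Ω : Set 𝕜) (ζ₀ : 𝕜) (F f : 𝕜 → E) : Prop :=
  F ζ₀ = 0 ∧ ∀ z ∈ Ω, HasDerivAt F (f z) z

variable [RCLike 𝕜] [NormedAddCommGroup E] [NormedSpace 𝕜 E] {Ω : Set 𝕜} {ζ₀ : 𝕜}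
  {F₁ F₂ f₁ f₂ : 𝕜 → E}

namespace IsPrimitiveOn

theorem add (h₁ : IsPrimitiveOn Ω ζ₀ F₁ f₁) (h₂ : IsPrimitiveOn Ω ζ₀ F₂ f₂) :
    IsPrimitiveOn Ω ζ₀ (F₁ + F₂) (f₁ + f₂) :=
  ⟨by simp [h₁.1, h₂.1], fun z hz => (h₁.2 z hz).add (h₂.2 z hz)⟩

theorem sub (h₁ : IsPrimitiveOn Ω ζ₀ F₁ f₁) (h₂ : IsPrimitiveOn Ω ζ₀ F₂ f₂) :
    IsPrimitiveOn Ω ζ₀ (F₁ - F₂) (f₁ - f₂) :=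
  ⟨by simp [h₁.1, h₂.1], fun z hz => (h₁.2 z hz).sub (h₂.2 z hz)⟩

theorem const_smul (h : IsPrimitiveOn Ω ζ₀ F₁ f₁) (c : 𝕜) :
    IsPrimitiveOn Ω ζ₀ (c • F₁) (c • f₁) :=
  ⟨by simp [h.1], fun z hz => (h.2 z hz).const_smul c⟩

theorem eqOn (hΩ : IsOpen Ω) (hΩc : IsPreconnected Ω) (hζ₀ : ζ₀ ∈ Ω)
    (h₁ : IsPrimitiveOn Ω ζ₀ F₁ f₁) (h₂ : IsPrimitiveOn Ω ζ₀ F₂ f₂) (hf : EqOn f₁ f₂ Ω) :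
    EqOn F₁ F₂ Ω :=
  hΩ.eqOn_of_deriv_eq hΩc (fun z hz => (h₁.2 z hz).differentiableAt.differentiableWithinAt)
    (fun z hz => (h₂.2 z hz).differentiableAt.differentiableWithinAt)
    (fun z hz => by rw [(h₁.2 z hz).deriv, (h₂.2 z hz).deriv, hf hz]) hζ₀ (h₁.1.trans h₂.1.symm)

end IsPrimitiveOn

variable (E) in
def PrimitiveControl (Ω : Set 𝕜) (ζ₀ : 𝕜) (K : Set 𝕜) (C : ℝ) (s : Set 𝕜) : Prop :=
  ∀ F f : 𝕜 → E, IsPrimitiveOn Ω ζ₀ F f →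
    ∀ B, 0 ≤ B → (∀ w ∈ K, ‖f w‖ ≤ B) → ∀ z ∈ s, ‖F z‖ ≤ C * B

namespace PrimitiveControl

variable {K K₁ K₂ s t : Set 𝕜} {C C₁ C₂ : ℝ}

theorem mono (h : PrimitiveControl E Ω ζ₀ K C t) (hst : s ⊆ t) : PrimitiveControl E Ω ζ₀ K C s :=
  fun F f hF B hB hfB z hz => h F f hF B hB hfB z (hst hz)

theorem union (h₁ : PrimitiveControl E Ω ζ₀ K₁ C₁ s) (h₂ : PrimitiveControl E Ω ζ₀ K₂ C₂ t) :
    PrimitiveControl E Ω ζ₀ (K₁ ∪ K₂) (max C₁ C₂) (s ∪ t) := by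
  rintro F f hF B hB hfB z (hz | hz)
  · exact (h₁ F f hF B hB (fun w hw => hfB w (Or.inl hw)) z hz).trans
      (mul_le_mul_of_nonneg_right (le_max_left C₁ C₂) hB)
  · exact (h₂ F f hF B hB (fun w hw => hfB w (Or.inr hw)) z hz).trans
      (mul_le_mul_of_nonneg_right (le_max_right C₁ C₂) hB)

theorem closedBall_of_mem {a c : 𝕜} {r : ℝ} (h : PrimitiveControl E Ω ζ₀ K C {a})
    (hball : closedBall c r ⊆ Ω) (ha : a ∈ closedBall c r) :
    PrimitiveControl E Ω ζ₀ (K ∪ closedBall c r) (C + 2 * r) (closedBall c r) := by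
  intro F f hF B hB hfB z hz
  have hFa : ‖F a‖ ≤ C * B := h F f hF B hB (fun w hw => hfB w (Or.inl hw)) a rfl
  have hza : ‖z - a‖ ≤ 2 * r :=
    calc ‖z - a‖ = dist z a := (dist_eq_norm z a).symm
      _ ≤ dist z c + dist a c := dist_triangle_right z a c
      _ ≤ r + r := add_le_add hz ha
      _ = 2 * r := (two_mul r).symm
  have hFza : ‖F z - F a‖ ≤ B * ‖z - a‖ :=
    (convex_closedBall c r).norm_image_sub_le_of_norm_hasDerivWithin_le
      (fun x hx => (hF.2 x (hball hx)).hasDerivWithinAt) (fun x hx => hfB x (Or.inr hx)) ha hz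
  calc ‖F z‖ ≤ ‖F a‖ + ‖F z - F a‖ := norm_le_norm_add_norm_sub' _ _
    _ ≤ C * B + B * (2 * r) := add_le_add hFa (hFza.trans (mul_le_mul_of_nonneg_left hza hB))
    _ = (C + 2 * r) * B := by ring

end PrimitiveControl

theorem exists_primitiveControl_singleton (hΩ : IsOpen Ω) (hΩc : IsPreconnected Ω)
    (hζ₀ : ζ₀ ∈ Ω) {z : 𝕜} (hz : z ∈ Ω) :
    ∃ K C, K ⊆ Ω ∧ IsCompact K ∧ PrimitiveControl E Ω ζ₀ K C {z} := by
  set A := {z ∈ Ω | ∃ K C, K ⊆ Ω ∧ IsCompact K ∧ PrimitiveControl E Ω ζ₀ K C {z}}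
  have hball {c : 𝕜} {r : ℝ} (hcr : closedBall c r ⊆ Ω) (hA : (closedBall c r ∩ A).Nonempty) :
      closedBall c r ⊆ A := by
    obtain ⟨a, ha, -, K, C, hKΩ, hK, hKC⟩ := hA
    exact fun y hy => ⟨hcr hy, K ∪ closedBall c r, C + 2 * r, union_subset hKΩ hcr,
      hK.union (isCompact_closedBall c r),
      (hKC.closedBall_of_mem hcr ha).mono (singleton_subset_iff.2 hy)⟩
  have hopen : IsOpen A := by
    refine isOpen_iff_mem_nhds.2 fun a ha => ?_
    obtain ⟨r, hr, hrΩ⟩ := nhds_basis_closedBall.mem_iff.1 (hΩ.mem_nhds ha.1)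
    exact mem_of_superset (closedBall_mem_nhds a hr)
      (hball hrΩ ⟨a, mem_closedBall_self hr.le, ha⟩)
  have hclosed : closure A ∩ Ω ⊆ A := by
    rintro a ⟨haA, haΩ⟩
    obtain ⟨r, hr, hrΩ⟩ := nhds_basis_closedBall.mem_iff.1 (hΩ.mem_nhds haΩ)
    exact hball hrΩ (mem_closure_iff_nhds.1 haA _ (closedBall_mem_nhds a hr))
      (mem_closedBall_self hr.le)
  have hζ₀A : ζ₀ ∈ A := ⟨hζ₀, ∅, 0, empty_subset Ω, isCompact_empty,
    fun F f hF B _ _ z hz => by simp [mem_singleton_iff.1 hz, hF.1]⟩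
  exact (hΩc.subset_of_closure_inter_subset hopen ⟨ζ₀, hζ₀, hζ₀A⟩ hclosed hz).2

theorem exists_primitiveControl (hΩ : IsOpen Ω) (hΩc : IsPreconnected Ω) (hζ₀ : ζ₀ ∈ Ω)
    {K₀ : Set 𝕜} (hK₀ : IsCompact K₀) (hK₀Ω : K₀ ⊆ Ω) :
    ∃ K C, K ⊆ Ω ∧ IsCompact K ∧ PrimitiveControl E Ω ζ₀ K C K₀ := by
  refine hK₀.induction_on ⟨∅, 0, empty_subset Ω, isCompact_empty, fun _ _ _ _ _ _ _ h => h.elim⟩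
    ?_ ?_ fun z hz => ?_
  · rintro s t hst ⟨K, C, hKΩ, hK, h⟩
    exact ⟨K, C, hKΩ, hK, h.mono hst⟩
  · rintro s t ⟨K₁, C₁, h₁Ω, h₁, hs⟩ ⟨K₂, C₂, h₂Ω, h₂, ht⟩
    exact ⟨K₁ ∪ K₂, max C₁ C₂, union_subset h₁Ω h₂Ω, h₁.union h₂, hs.union ht⟩
  · obtain ⟨r, hr, hrΩ⟩ := nhds_basis_closedBall.mem_iff.1 (hΩ.mem_nhds (hK₀Ω hz))
    obtain ⟨K, C, hKΩ, hK, h⟩ := exists_primitiveControl_singleton (E := E) hΩ hΩc hζ₀ (hK₀Ω hz)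
    exact ⟨closedBall z r, mem_nhdsWithin_of_mem_nhds (closedBall_mem_nhds z hr),
      K ∪ closedBall z r, C + 2 * r, union_subset hKΩ hrΩ, hK.union (isCompact_closedBall z r),
      h.closedBall_of_mem hrΩ (mem_closedBall_self hr.le)⟩

theorem eqOn_zero_of_hasDerivAt_of_eqOn_const (hΩ : IsOpen Ω) {F f : 𝕜 → E} {a : E}
    (hF : ∀ z ∈ Ω, HasDerivAt F (f z) z) (hFa : EqOn F (fun _ => a) Ω) : EqOn f 0 Ω :=
  fun z hz => (hF z hz).unique
    ((hasDerivAt_const z a).congr_of_eventuallyEq (eventually_of_mem (hΩ.mem_nhds hz) hFa))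

end Primitive

section Unbounded

variable {Ω : Set ℂ}

theorem exists_eqOn_zpow_add_of_hasDerivAt (hΩ : IsOpen Ω) (hΩc : IsPreconnected Ω) {w : ℂ}
    (hw : w ∉ Ω) {F R : ℂ → ℂ} {c : ℂ} {m : ℤ} (hm : m + 1 ≠ 0) (hR : Differentiable ℂ R)
    (hF : ∀ z ∈ Ω, HasDerivAt F (c * (z - w) ^ m + R z) z) :
    ∃ R' : ℂ → ℂ, Differentiable ℂ R' ∧
      EqOn F (fun z => c / (m + 1) * (z - w) ^ (m + 1) + R' z) Ω := by
  obtain ⟨P, hP⟩ := hR.isExactOn_univ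
  have hm' : (m : ℂ) + 1 ≠ 0 := by exact_mod_cast hm
  have hG : ∀ z ∈ Ω, HasDerivAt (fun z => c / (m + 1) * (z - w) ^ (m + 1) + P z)
      (c * (z - w) ^ m + R z) z := by
    intro z hz
    have hzw : z - w ≠ 0 := sub_ne_zero.2 (ne_of_mem_of_not_mem hz hw)
    have hpow : HasDerivAt (fun z => (z - w) ^ (m + 1)) ((m + 1 : ℤ) * (z - w) ^ m) z := by
      simpa [Function.comp_def] using (hasDerivAt_zpow (m + 1) (z - w) (Or.inl hzw)).comp z
        ((hasDerivAt_id z).sub_const w)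
    refine ((hpow.const_mul (c / (m + 1))).add (hP z (mem_univ z))).congr_deriv ?_
    push_cast
    field_simp
  obtain ⟨a, ha⟩ := hΩ.exists_eq_add_of_deriv_eq hΩc
    (fun z hz => (hF z hz).differentiableAt.differentiableWithinAt)
    (fun z hz => (hG z hz).differentiableAt.differentiableWithinAt)
    (fun z hz => by rw [(hF z hz).deriv, (hG z hz).deriv])
  refine ⟨fun z => P z + a, fun z => (hP z (mem_univ z)).differentiableAt.add_const a,
    fun z hz => ?_⟩
  rw [ha hz]
  ring

theorem unbOn_mul_inv_add {w c : ℂ} (hwΩ : w ∈ closure Ω) (hw : w ∉ Ω) (hc : c ≠ 0)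
    {R : ℂ → ℂ} (hR : ContinuousAt R w) : UnbOn (fun z => c * (z - w)⁻¹ + R z) Ω := by
  rintro ⟨C, hC⟩
  have hinv : Tendsto (fun z => ‖c * (z - w)⁻¹‖) (𝓝[≠] w) atTop := by
    have hsub : Tendsto (fun z => z - w) (𝓝[≠] w) (𝓝[≠] 0) :=
      tendsto_nhdsWithin_of_tendsto_nhds_of_eventually_within _
        ((continuous_sub_right w).tendsto' w 0 (sub_self w) |>.mono_left nhdsWithin_le_nhds)
        (eventually_nhdsWithin_of_forall fun z hz => sub_ne_zero.2 hz)
    simpa only [norm_mul, Function.comp_def] using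
      (tendsto_norm_inv_nhdsNE_zero_atTop.comp hsub).const_mul_atTop (norm_pos_iff.2 hc)
  have hlim : Tendsto (fun z => ‖c * (z - w)⁻¹ + R z‖) (𝓝[Ω] w) atTop := by
    refine tendsto_atTop_mono (fun z => ?_) ((hinv.mono_left (nhdsWithin_mono w
      fun z hz => ne_of_mem_of_not_mem hz hw)).atTop_add
      (hR.norm.neg.mono_left nhdsWithin_le_nhds))
    have := norm_sub_le (c * (z - w)⁻¹ + R z) (R z)
    rw [add_sub_cancel_right] at this
    show _ + -‖R z‖ ≤ _
    linarith
  have := mem_closure_iff_nhdsWithin_neBot.1 hwΩ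
  obtain ⟨z, hz, hzΩ⟩ := ((hlim.eventually_gt_atTop C).and self_mem_nhdsWithin).exists
  exact (hC z hzΩ).not_gt hz

end Unbounded

namespace Hol

variable {Ω : Set ℂ} {ζ₀ : ℂ} {T : Hol Ω → Hol Ω}

instance : CoeFun (Hol Ω) (fun _ => ℂ → ℂ) := ⟨fun f => toFun (cpts Ω) f.1⟩

instance : ContinuousSMul ℂ (Hol Ω) :=
  UniformOnFun.continuousSMul_submodule_of_image_bounded ℂ ℂ ℂ (Hol Ω) fun _ hu _ hK =>
    (NormedSpace.isVonNBounded_iff ℂ).2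
      (hK.2.image_of_continuousOn (hu.continuousOn.mono hK.1)).isBounded

theorem continuous_apply {z : ℂ} (hz : z ∈ Ω) : Continuous fun f : Hol Ω => f z :=
  (uniformContinuous_eval_of_mem ℂ (cpts Ω) (mem_singleton z)
    ⟨singleton_subset_iff.2 hz, isCompact_singleton⟩).continuous.comp continuous_subtype_val

theorem continuous_of_isPrimitiveOn (hΩ : IsOpen Ω) (hΩc : IsPreconnected Ω) (hζ₀ : ζ₀ ∈ Ω)
    (hT : ∀ f, IsPrimitiveOn Ω ζ₀ (T f) f) : Continuous T := by
  refine continuous_iff_continuousAt.2 fun f => ?_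
  rw [ContinuousAt, tendsto_subtype_rng, UniformOnFun.tendsto_iff_tendstoUniformlyOn]
  intro K₀ hK₀
  obtain ⟨K, C, hKΩ, hK, hC⟩ := exists_primitiveControl (E := ℂ) hΩ hΩc hζ₀ hK₀.2 hK₀.1
  have hf := UniformOnFun.tendsto_iff_tendstoUniformlyOn.1 (continuous_subtype_val.tendsto f) K
    ⟨hKΩ, hK⟩
  rw [tendstoUniformlyOn_iff] at hf ⊢
  intro ε hε
  have hδ : 0 < ε / (|C| + 1) := by positivity
  filter_upwards [hf _ hδ] with g hg z hz
  have hfg : ∀ w ∈ K, ‖(f - g : ℂ → ℂ) w‖ ≤ ε / (|C| + 1) :=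
    fun w hw => (dist_eq_norm (f w) (g w) ▸ hg w hw).le
  calc dist (T f z) (T g z) = ‖(T f - T g : ℂ → ℂ) z‖ := dist_eq_norm _ _
    _ ≤ C * (ε / (|C| + 1)) := hC _ _ ((hT f).sub (hT g)) _ hδ.le hfg z hz
    _ ≤ |C| * (ε / (|C| + 1)) := mul_le_mul_of_nonneg_right (le_abs_self C) hδ.le
    _ < (|C| + 1) * (ε / (|C| + 1)) := mul_lt_mul_of_pos_right (lt_add_one _) hδ
    _ = ε := mul_div_cancel₀ ε (by positivity)

theorem iterate_add_eqOn (hΩ : IsOpen Ω) (hΩc : IsPreconnected Ω) (hζ₀ : ζ₀ ∈ Ω)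
    (hT : ∀ f, IsPrimitiveOn Ω ζ₀ (T f) f) (f g : Hol Ω) :
    ∀ j, EqOn (T^[j] (f + g)) (T^[j] f + T^[j] g : ℂ → ℂ) Ω
  | 0 => fun _ _ => rfl
  | j + 1 => by
    simp only [Function.iterate_succ_apply']
    exact (hT _).eqOn hΩ hΩc hζ₀ ((hT _).add (hT _)) (iterate_add_eqOn hΩ hΩc hζ₀ hT f g j)

theorem iterate_smul_eqOn (hΩ : IsOpen Ω) (hΩc : IsPreconnected Ω) (hζ₀ : ζ₀ ∈ Ω)
    (hT : ∀ f, IsPrimitiveOn Ω ζ₀ (T f) f) (c : ℂ) (f : Hol Ω) :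
    ∀ j, EqOn (T^[j] (c • f)) (c • T^[j] f : ℂ → ℂ) Ω
  | 0 => fun _ _ => rfl
  | j + 1 => by
    simp only [Function.iterate_succ_apply']
    exact (hT _).eqOn hΩ hΩc hζ₀ ((hT _).const_smul c) (iterate_smul_eqOn hΩ hΩc hζ₀ hT c f j)

/-- `f ↦ (T^[k] f)|_Ω` is linear, although `T` itself need not be: `T f` is arbitrary off `Ω`. -/
def restrictIterate (hΩ : IsOpen Ω) (hΩc : IsPreconnected Ω) (hζ₀ : ζ₀ ∈ Ω)
    (hT : ∀ f, IsPrimitiveOn Ω ζ₀ (T f) f) (k : ℕ) : Hol Ω →ₗ[ℂ] Ω → ℂ where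
  toFun f z := T^[k] f z
  map_add' f g := funext fun z => iterate_add_eqOn hΩ hΩc hζ₀ hT f g k z.2
  map_smul' c f := funext fun z => iterate_smul_eqOn hΩ hΩc hζ₀ hT c f k z.2

theorem exists_eqOn_const_of_iterate (hΩ : IsOpen Ω) (hT : ∀ f, IsPrimitiveOn Ω ζ₀ (T f) f) :
    ∀ (j : ℕ) (f : Hol Ω), (∃ a, EqOn (T^[j] f) (fun _ => a) Ω) → ∃ a, EqOn f (fun _ => a) Ω
  | 0, _, h => h
  | j + 1, f, h => by
    obtain ⟨a, ha⟩ := exists_eqOn_const_of_iterate hΩ hT j (T f) h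
    exact ⟨0, eqOn_zero_of_hasDerivAt_of_eqOn_const hΩ (hT f).2 ha⟩

theorem iterate_eqOn_zpow_add (hΩ : IsOpen Ω) (hΩc : IsPreconnected Ω)
    (hT : ∀ f, IsPrimitiveOn Ω ζ₀ (T f) f) {w : ℂ} (hw : w ∉ Ω) {k : ℕ} {h : Hol Ω}
    (hh : EqOn h (fun z => (z - w) ^ (-(k + 1 : ℤ))) Ω) :
    ∀ j ≤ k, ∃ c ≠ 0, ∃ R : ℂ → ℂ, Differentiable ℂ R ∧
      EqOn (T^[j] h) (fun z => c * (z - w) ^ ((j : ℤ) - (k + 1)) + R z) Ω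
  | 0, _ => ⟨1, one_ne_zero, 0, differentiable_const 0, fun z hz => by simp [hh hz]⟩
  | j + 1, hj => by
    obtain ⟨c, hc, R, hR, hjh⟩ := iterate_eqOn_zpow_add hΩ hΩc hT hw hh j (by omega)
    have hm : (j : ℤ) - (k + 1) + 1 ≠ 0 := by omega
    obtain ⟨R', hR', hR'h⟩ := exists_eqOn_zpow_add_of_hasDerivAt hΩ hΩc hw hm hR
      fun z hz => (hjh hz) ▸ (hT (T^[j] h)).2 z hz
    have hm' : (((j : ℤ) - (k + 1) : ℤ) : ℂ) + 1 ≠ 0 := by exact_mod_cast hm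
    refine ⟨_, div_ne_zero hc hm', R', hR', fun z hz => ?_⟩
    rw [Function.iterate_succ_apply', hR'h hz]
    push_cast
    ring_nf

theorem exists_unbOn_iterate_univ {ζ₀ : ℂ} {T : Hol univ → Hol univ}
    (hT : ∀ f, IsPrimitiveOn univ ζ₀ (T f) f) (k : ℕ) : ∃ h : Hol univ, UnbOn (T^[k] h) univ := by
  refine ⟨⟨ofFun (cpts univ) id, differentiableOn_id⟩, fun ⟨C, hC⟩ => ?_⟩
  have hconst : EqOn (T^[k] _) (fun _ => T^[k] _ 0) univ := fun z _ =>
    (differentiableOn_univ.1 (T^[k] _).2).apply_eq_apply_of_bounded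
      (isBounded_iff_forall_norm_le.2 ⟨C, forall_mem_range.2 fun z => hC z (mem_univ z)⟩) z 0
  obtain ⟨a, ha⟩ := exists_eqOn_const_of_iterate isOpen_univ hT k _ ⟨_, hconst⟩
  exact zero_ne_one ((ha (mem_univ 0)).trans (ha (mem_univ 1)).symm)

theorem exists_unbOn_iterate_of_mem_closure (hΩ : IsOpen Ω) (hΩc : IsPreconnected Ω)
    (hT : ∀ f, IsPrimitiveOn Ω ζ₀ (T f) f) {w : ℂ} (hwΩ : w ∈ closure Ω) (hw : w ∉ Ω) (k : ℕ) :
    ∃ h : Hol Ω, UnbOn (T^[k] h) Ω := by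
  have hpole : DifferentiableOn ℂ (fun z => (z - w) ^ (-(k + 1 : ℤ))) Ω := fun z hz =>
    ((differentiableAt_id.sub_const w).zpow
      (Or.inl (sub_ne_zero.2 (ne_of_mem_of_not_mem hz hw)))).differentiableWithinAt
  let h : Hol Ω := ⟨ofFun (cpts Ω) fun z => (z - w) ^ (-(k + 1 : ℤ)), hpole⟩
  obtain ⟨c, hc, R, hR, hkh⟩ := iterate_eqOn_zpow_add hΩ hΩc hT hw (h := h)
    (fun _ _ => rfl) k le_rfl
  refine ⟨h, fun ⟨C, hC⟩ => unbOn_mul_inv_add hwΩ hw hc hR.continuous.continuousAt ⟨C, ?_⟩⟩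
  intro z hz
  simpa [hkh hz] using hC z hz

theorem exists_unbOn_iterate (hΩ : IsOpen Ω) (hΩc : IsPreconnected Ω) (hζ₀ : ζ₀ ∈ Ω)
    (hT : ∀ f, IsPrimitiveOn Ω ζ₀ (T f) f) (k : ℕ) : ∃ h : Hol Ω, UnbOn (T^[k] h) Ω := by
  rcases eq_or_ne Ω univ with rfl | hne
  · exact exists_unbOn_iterate_univ hT k
  have hclosed : ¬ IsClosed Ω := fun h =>
    (isClopen_iff.1 ⟨h, hΩ⟩).elim (fun h0 => (h0 ▸ hζ₀ : ζ₀ ∈ (∅ : Set ℂ))) hne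
  obtain ⟨w, hwΩ, hw⟩ := not_subset.1 (mt closure_subset_iff_isClosed.1 hclosed)
  exact exists_unbOn_iterate_of_mem_closure hΩ hΩc hT hwΩ hw k

end Hol


theorem stmt6_general (Ω : Set ℂ) (hΩ : IsOpen Ω) (hΩ' : IsConnected Ω)
    (ζ₀ : ℂ) (hζ₀ : ζ₀ ∈ Ω)
    (T : Hol Ω → Hol Ω)
    (hT : ∀ f : Hol Ω, toFun (cpts Ω) (T f).1 ζ₀ = 0 ∧
      ∀ z ∈ Ω, HasDerivAt (toFun (cpts Ω) (T f).1) (toFun (cpts Ω) f.1 z) z)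
    (k : ℕ) :
    IsMeagre {f : Hol Ω |
      ∃ C : ℝ, ∀ z ∈ Ω, ‖toFun (cpts Ω) ((T^[k]) f).1 z‖ ≤ C} := by
  have hΩc := hΩ'.isPreconnected
  have hTc := Hol.continuous_of_isPrimitiveOn hΩ hΩc hζ₀ hT
  obtain ⟨h, hh⟩ := Hol.exists_unbOn_iterate hΩ hΩc hζ₀ hT k
  have hmeagre := (Hol.restrictIterate hΩ hΩc hζ₀ hT k).isMeagre_setOf_bounded
    (fun z => (Hol.continuous_apply z.2).comp (hTc.iterate k))
    ⟨h, fun ⟨C, hC⟩ => hh ⟨C, fun z hz => hC ⟨z, hz⟩⟩⟩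
  simpa [Subtype.forall, Hol.restrictIterate] using hmeagre

theorem stmt6 (Ω : Set ℂ) (hΩ : IsOpen Ω) (hΩ' : IsConnected Ω)
    (hsc : SimplyConnectedSpace Ω) (ζ₀ : ℂ) (hζ₀ : ζ₀ ∈ Ω)
    (T : Hol Ω → Hol Ω)
    (hT : ∀ f : Hol Ω, toFun (cpts Ω) (T f).1 ζ₀ = 0 ∧
      ∀ z ∈ Ω, HasDerivAt (toFun (cpts Ω) (T f).1) (toFun (cpts Ω) f.1 z) z)
    (k : ℕ) (hk : 1 ≤ k) :
    IsMeagre {f : Hol Ω |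
      ∃ C : ℝ, ∀ z ∈ Ω, ‖toFun (cpts Ω) ((T^[k]) f).1 z‖ ≤ C} :=
  stmt6_general Ω hΩ hΩ' ζ₀ hζ₀ T hT k
end
end

section
/- Let V be a topological vector space over ℝ or ℂ, X a nonempty set, and T : V → (functions X → ℂ) a linear operator such that for every x ∈ X the map α ↦ T(α)(x) is continuous on V. Let S = {α ∈ V : T(α) is unbounded on X}. Then either S = ∅ or S is a dense G_δ subset of V. -/
/-!
The vectors `α` with `T α` bounded form a submodule `B` of `V`, the preimage under `T` of the
bounded functions, and `S = Bᶜ`. A proper submodule of a topological vector space has empty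
interior, so its complement is dense as soon as it is nonempty. Pointwise continuity makes
`S = ⋂ m, ⋃ x, {α | m < ‖T α x‖}` an intersection of countably many open sets.
-/

open Filter Topology

def boundedFunctions (𝕜 X A : Type*) [CommSemiring 𝕜] [SeminormedRing A] [Algebra 𝕜 A] :
    Submodule 𝕜 (X → A) where
  carrier := {f | ∃ C : ℝ, ∀ x, ‖f x‖ ≤ C}
  zero_mem' := ⟨0, fun _ => by simp⟩
  add_mem' := by
    rintro f g ⟨C, hf⟩ ⟨D, hg⟩
    exact ⟨C + D, fun x => (norm_add_le _ _).trans (add_le_add (hf x) (hg x))⟩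
  smul_mem' := by
    rintro c f ⟨C, hf⟩
    refine ⟨‖algebraMap 𝕜 A c‖ * C, fun x => ?_⟩
    calc ‖(c • f) x‖ = ‖algebraMap 𝕜 A c * f x‖ := by rw [Pi.smul_apply, Algebra.smul_def]
      _ ≤ ‖algebraMap 𝕜 A c‖ * ‖f x‖ := norm_mul_le _ _
      _ ≤ ‖algebraMap 𝕜 A c‖ * C := by gcongr; exact hf x

theorem isGδ_setOf_not_exists_forall_norm_le {V X E : Type*} [TopologicalSpace V]
    [SeminormedAddCommGroup E] {f : V → X → E} (hf : ∀ x, Continuous fun a => f a x) :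
    IsGδ {a | ¬ ∃ C : ℝ, ∀ x, ‖f a x‖ ≤ C} := by
  have hS : {a | ¬ ∃ C : ℝ, ∀ x, ‖f a x‖ ≤ C} = ⋂ m : ℕ, ⋃ x, {a | (m : ℝ) < ‖f a x‖} := by
    ext a
    simp only [Set.mem_ofPred_eq, Set.mem_iInter, Set.mem_iUnion, not_exists, not_forall, not_le]
    exact ⟨fun h m => h m, fun h C => (h ⌈C⌉₊).imp fun x hx => (Nat.le_ceil C).trans_lt hx⟩
  rw [hS]
  exact .iInter_of_isOpen fun m => isOpen_iUnion fun x => isOpen_lt continuous_const (hf x).norm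

theorem Submodule.dense_compl_of_ne_top_s18 {𝕜 M : Type*} [NontriviallyNormedField 𝕜]
    [AddCommGroup M] [Module 𝕜 M] [TopologicalSpace M] [ContinuousAdd M] [ContinuousSMul 𝕜 M]
    {p : Submodule 𝕜 M} (hp : p ≠ ⊤) : Dense (p : Set M)ᶜ := by
  have : NeBot (𝓝[{c : 𝕜 | IsUnit c}] 0) := by
    rw [show {c : 𝕜 | IsUnit c} = {0}ᶜ from Set.ext fun c => isUnit_iff_ne_zero]
    exact NormedField.nhdsNE_neBot 0
  rw [← interior_eq_empty_iff_dense_compl, ← Set.not_nonempty_iff_eq_empty]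
  exact fun h => hp (p.eq_top_of_nonempty_interior' h)

theorem stmt18_general (𝕜 : Type*) [RCLike 𝕜] [Algebra 𝕜 ℂ]
    (V : Type*) [AddCommGroup V] [Module 𝕜 V] [TopologicalSpace V]
    [IsTopologicalAddGroup V] [ContinuousSMul 𝕜 V]
    (X : Type*)
    (T : V →ₗ[𝕜] (X → ℂ))
    (hT : ∀ x : X, Continuous fun a : V => T a x)
    (S : Set V)
    (hS : S = {a : V | ¬ ∃ C : ℝ, ∀ x : X, ‖T a x‖ ≤ C}) :
    S = ∅ ∨ (Dense S ∧ IsGδ S) := by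
  have hS_compl : S = ((boundedFunctions 𝕜 X ℂ).comap T : Set V)ᶜ := hS
  rcases S.eq_empty_or_nonempty with hempty | ⟨a, ha⟩
  · exact .inl hempty
  refine .inr ⟨?_, hS ▸ isGδ_setOf_not_exists_forall_norm_le hT⟩
  rw [hS_compl] at ha ⊢
  exact Submodule.dense_compl_of_ne_top_s18 fun htop => ha (htop ▸ Submodule.mem_top)

theorem stmt18 (𝕜 : Type*) [RCLike 𝕜] [Algebra 𝕜 ℂ]
    (V : Type*) [AddCommGroup V] [Module 𝕜 V] [TopologicalSpace V]
    [IsTopologicalAddGroup V] [ContinuousSMul 𝕜 V]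
    (X : Type*) [Nonempty X]
    (T : V →ₗ[𝕜] (X → ℂ))
    (hT : ∀ x : X, Continuous fun a : V => T a x)
    (S : Set V)
    (hS : S = {a : V | ¬ ∃ C : ℝ, ∀ x : X, ‖T a x‖ ≤ C}) :
    S = ∅ ∨ (Dense S ∧ IsGδ S) :=
  stmt18_general 𝕜 V X T hT S hS
end
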